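/- arXiv:1009.3972 — 9 statements merged into one kernel-verified Lean document; each statement's English description precedes it below -/
import Mathlib

section
/- Let G be a group equipped with a topology such that inversion is continuous and multiplication is continuous in each variable separately (a quasitopological group). Let c(G) denote G with the quotient topology induced by the multiplication map μ : G × G → G. Then c(G) is again a quasitopological group: inversion and all left and right translations on c(G) are continuous. -/
/-- A quasitopological group: inversion continuous, multiplication separately continuous. -/
def IsQuasiTopologicalGroup {G : Type*} [Group G] (t : TopologicalSpace G) : Prop :=
  @Continuous G G t t (fun x => x⁻¹) ∧
    (∀ g : G, @Continuous G G t t (fun x => g * x)) ∧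
    (∀ g : G, @Continuous G G t t (fun x => x * g))

/-- The quotient topology coinduced by multiplication `μ : G × G → G`. -/
def cTop {G : Type*} [Group G] (t : TopologicalSpace G) : TopologicalSpace G :=
  TopologicalSpace.coinduced (fun p : G × G => p.1 * p.2)
    (@instTopologicalSpaceProd G G t t)

/-- `s` is the finest group topology coarser than `t`. -/
def IsTau {G : Type*} [Group G] (t s : TopologicalSpace G) : Prop :=
  t ≤ s ∧ @IsTopologicalGroup G s _ ∧
    ∀ s' : TopologicalSpace G, t ≤ s' → @IsTopologicalGroup G s' _ → s ≤ s'

/- Every element of `c(G)` is a product `a * b`, and each of the three maps lifts along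
`μ` to a continuous self-map of `G × G`: `(a, b) ↦ (b⁻¹, a⁻¹)`, `(a, b) ↦ (g * a, b)` and
`(a, b) ↦ (a, b * g)`. A map that lifts continuously along the quotient map `μ` is continuous
for the quotient topology. -/

open Topology

namespace cTop

variable {G : Type*} [Group G] [t : TopologicalSpace G]

theorem continuous_of_mul_lift {φ : G → G} {ψ : G × G → G × G} (hψ : Continuous ψ)
    (hφψ : ∀ a b : G, φ (a * b) = (ψ (a, b)).1 * (ψ (a, b)).2) :
    Continuous[cTop t, cTop t] φ := by
  have hlift : φ ∘ (fun p : G × G => p.1 * p.2) = (fun p : G × G => p.1 * p.2) ∘ ψ :=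
    funext fun p => hφψ p.1 p.2
  rw [cTop, continuous_coinduced_dom, hlift]
  exact @Continuous.comp _ _ _ _ _ (cTop t) _ _ continuous_coinduced_rng hψ

theorem continuous_inv (hinv : Continuous fun x : G => x⁻¹) :
    Continuous[cTop t, cTop t] fun x : G => x⁻¹ :=
  continuous_of_mul_lift ((hinv.comp continuous_snd).prodMk (hinv.comp continuous_fst))
    fun a b => mul_inv_rev a b

theorem continuous_mul_left {g : G} (hg : Continuous fun x : G => g * x) :
    Continuous[cTop t, cTop t] fun x : G => g * x :=
  continuous_of_mul_lift ((hg.comp continuous_fst).prodMk continuous_snd)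
    fun a b => (mul_assoc g a b).symm

theorem continuous_mul_right {g : G} (hg : Continuous fun x : G => x * g) :
    Continuous[cTop t, cTop t] fun x : G => x * g :=
  continuous_of_mul_lift (continuous_fst.prodMk (hg.comp continuous_snd))
    fun a b => mul_assoc a b g

end cTop

/-- `c(G)` is again a quasitopological group. -/
theorem cTop_isQuasiTopologicalGroup {G : Type*} [Group G] (t : TopologicalSpace G)
    (h : IsQuasiTopologicalGroup t) :
    IsQuasiTopologicalGroup (cTop t) := by
  obtain ⟨hinv, hleft, hright⟩ := h
  exact ⟨cTop.continuous_inv hinv, fun g => cTop.continuous_mul_left (hleft g),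
    fun g => cTop.continuous_mul_right (hright g)⟩
end

section
/- A quasitopological group G is a topological group if and only if the topology of G equals the quotient topology on G induced by the multiplication map μ : G × G → G. -/
/-! `x ↦ (1, x)` is a continuous section of multiplication, so `t ≤ cTop t` always holds, while
`cTop t ≤ t` says exactly that multiplication is jointly continuous. -/

section cTop

variable {G : Type*} [Group G] (t : TopologicalSpace G)

theorem le_cTop : t ≤ cTop t := fun U hU => by
  have hsection : Continuous fun x : G => ((1 : G), x) := continuous_const.prodMk continuous_id
  simpa only [Set.preimage_preimage, one_mul, Set.preimage_id'] using
    (isOpen_coinduced.mp hU).preimage hsection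

theorem cTop_le_iff_continuousMul : cTop t ≤ t ↔ ContinuousMul G :=
  ⟨fun hle => ⟨continuous_iff_coinduced_le.mpr hle⟩,
    fun _ => continuous_iff_coinduced_le.mp continuous_mul⟩

theorem eq_cTop_iff_continuousMul : t = cTop t ↔ ContinuousMul G := by
  rw [le_antisymm_iff, and_iff_right (le_cTop t), cTop_le_iff_continuousMul]

end cTop

/-- A quasitopological group is a topological group iff its topology equals the
quotient topology induced by multiplication. -/
theorem topologicalGroup_iff_eq_cTop {G : Type*} [Group G] (t : TopologicalSpace G)
    (h : IsQuasiTopologicalGroup t) :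
    @IsTopologicalGroup G t _ ↔ t = cTop t := by
  rw [eq_cTop_iff_continuousMul]
  exact ⟨fun hgroup => hgroup.toContinuousMul,
    fun hmul => { toContinuousMul := hmul, continuous_inv := h.1 }⟩
end

section
/- Let G be a quasitopological group, let H be an open subgroup of G, and let μ : G × G → G be multiplication. Then μ⁻¹(H) is open in G × G; consequently H is open in the quotient topology c(G) induced by μ. -/
theorem Subgroup.mul_mem_of_mul_mem {G : Type*} [Group G] (H : Subgroup G) {a b x y : G}
    (hab : a * b ∈ H) (hx : x * b ∈ H) (hy : a * y ∈ H) : x * y ∈ H := by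
  have : x * b * (a * b)⁻¹ * (a * y) ∈ H := H.mul_mem (H.mul_mem hx (H.inv_mem hab)) hy
  simpa [mul_assoc] using this

theorem Subgroup.isOpen_mul_preimage {G : Type*} [Group G] [TopologicalSpace G]
    [SeparatelyContinuousMul G] {H : Subgroup G} (hH : IsOpen (H : Set G)) :
    IsOpen ((fun p : G × G => p.1 * p.2) ⁻¹' (H : Set G)) := by
  refine isOpen_iff_forall_mem_open.2 fun p hp => ?_
  refine ⟨((· * p.2) ⁻¹' (H : Set G)) ×ˢ ((p.1 * ·) ⁻¹' (H : Set G)), ?_, ?_, hp, hp⟩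
  · rintro q ⟨hq₁, hq₂⟩
    exact H.mul_mem_of_mul_mem hp hq₁ hq₂
  · exact (hH.preimage (continuous_mul_const p.2)).prod (hH.preimage (continuous_const_mul p.1))

theorem IsQuasiTopologicalGroup.separatelyContinuousMul {G : Type*} [Group G]
    {t : TopologicalSpace G} (h : IsQuasiTopologicalGroup t) :
    @SeparatelyContinuousMul G t _ :=
  @SeparatelyContinuousMul.mk G t _ (h.2.1 _) (h.2.2 _)

/-- For an open subgroup `H` of a quasitopological group `G`, `μ⁻¹(H)` is open in
`G × G` and hence `H` is open in the quotient topology `c(G)`. -/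
theorem openSubgroup_cTop {G : Type*} [Group G] (t : TopologicalSpace G)
    (h : IsQuasiTopologicalGroup t) (H : Subgroup G) (hH : t.IsOpen (H : Set G)) :
    (@instTopologicalSpaceProd G G t t).IsOpen
        ((fun p : G × G => p.1 * p.2) ⁻¹' (H : Set G)) ∧
      (cTop t).IsOpen (H : Set G) := by
  let _ := t
  have := h.separatelyContinuousMul
  have hμ := Subgroup.isOpen_mul_preimage hH
  exact ⟨hμ, isOpen_coinduced.2 hμ⟩
end

section
/- The reflection τ from groups-with-topology to topological groups preserves finite products: for groups with topology G and H, the identity map τ(G × H) → τ(G) × τ(H) is an isomorphism of topological groups, where G × H carries the product topology. -/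
/-!
`τ` is a reflection: every homomorphism that is continuous from `(G, t)` into a topological
group stays continuous from `(G, τ t)`. Applied to `inl` and `inr`, this makes both inclusions
continuous from `τ(G)` and `τ(H)` into `τ(G × H)`, and since `(a, b) = (a, 1) * (1, b)`,
`τ(G) × τ(H)` is finer than `τ(G × H)`. Conversely `τ(G) × τ(H)` is a group topology coarser
than `tG × tH`, so it is coarser than `τ(G × H)` by maximality.
-/

open Topology

theorem IsTau.continuous_monoidHom {G K : Type*} [Group G] [Group K] [TopologicalSpace K]
    [IsTopologicalGroup K] {t s : TopologicalSpace G} (h : IsTau t s) (f : G →* K)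
    (hf : Continuous[t, _] f) : Continuous[s, _] f :=
  continuous_iff_le_induced.mpr <|
    h.2.2 _ (continuous_iff_le_induced.mp hf) (topologicalGroup_induced f)

theorem continuous_inl_of_prod_le {G H : Type*} [MulOneClass G] [MulOneClass H]
    {tG : TopologicalSpace G} {tH : TopologicalSpace H} {s : TopologicalSpace (G × H)}
    (h : @instTopologicalSpaceProd G H tG tH ≤ s) : Continuous[tG, s] (MonoidHom.inl G H) :=
  continuous_le_rng h (@Continuous.prodMk G H G tG tH tG _ _ continuous_id continuous_const)

theorem continuous_inr_of_prod_le {G H : Type*} [MulOneClass G] [MulOneClass H]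
    {tG : TopologicalSpace G} {tH : TopologicalSpace H} {s : TopologicalSpace (G × H)}
    (h : @instTopologicalSpaceProd G H tG tH ≤ s) : Continuous[tH, s] (MonoidHom.inr G H) :=
  continuous_le_rng h (@Continuous.prodMk G H H tG tH tH _ _ continuous_const continuous_id)

theorem MonoidHom.continuous_of_continuous_comp_inl_inr {G H M : Type*} [MulOneClass G]
    [MulOneClass H] [MulOneClass M] [TopologicalSpace G] [TopologicalSpace H] [TopologicalSpace M]
    [ContinuousMul M]
    (f : G × H →* M) (hl : Continuous (f.comp (MonoidHom.inl G H)))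
    (hr : Continuous (f.comp (MonoidHom.inr G H))) : Continuous f := by
  have hf : ⇑f = fun p => f.comp (MonoidHom.inl G H) p.1 * f.comp (MonoidHom.inr G H) p.2 := by
    funext p
    simp [← map_mul]
  rw [hf]
  exact (hl.comp continuous_fst).mul (hr.comp continuous_snd)

/-- `τ` preserves finite products: `τ(G × H)` equals `τ(G) × τ(H)` (so the identity
is an isomorphism of topological groups). -/
theorem tau_prod {G H : Type*} [Group G] [Group H]
    (tG : TopologicalSpace G) (tH : TopologicalSpace H)
    (τG : TopologicalSpace G) (τH : TopologicalSpace H)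
    (τP : TopologicalSpace (G × H))
    (hG : IsTau tG τG) (hH : IsTau tH τH)
    (hP : IsTau (@instTopologicalSpaceProd G H tG tH) τP) :
    τP = @instTopologicalSpaceProd G H τG τH := by
  have : @IsTopologicalGroup (G × H) τP _ := hP.2.1
  apply le_antisymm
  · have : @IsTopologicalGroup G τG _ := hG.2.1
    have : @IsTopologicalGroup H τH _ := hH.2.1
    exact hP.2.2 _ (inf_le_inf (induced_mono hG.1) (induced_mono hH.1)) inferInstance
  · have hinl := hG.continuous_monoidHom _ (continuous_inl_of_prod_le hP.1)
    have hinr := hH.continuous_monoidHom _ (continuous_inr_of_prod_le hP.1)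
    -- the instances on `G`, `H`, `G × H` found here are `τG`, `τH`, `τP`: the latest binders win
    exact continuous_id_iff_le.mp
      ((MonoidHom.id (G × H)).continuous_of_continuous_comp_inl_inr hinl hinr)
end

section
/- If f : G → H is a group homomorphism between groups with topology that is also a topological quotient map, then τ(f) : τ(G) → τ(H) is a topological quotient map. -/
/- Pulling the group topology `τ(H)` back along the continuous homomorphism `f` gives a group
topology coarser than `tG`, hence coarser than `τ(G)`: so `τ(f)` is continuous. Conversely, since
`f` is surjective, pushing `τ(G)` forward along `f` gives a group topology on `H` (the quotient
topology of `G ⧸ ker f`), coarser than `tG.coinduced f = tH`, hence coarser than `τ(H)`. -/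

theorem isTopologicalGroup_coinduced_of_surjective {G H : Type*} [Group G] [Group H]
    (t : TopologicalSpace G) [@IsTopologicalGroup G t _] (f : G →* H)
    (hf : Function.Surjective f) :
    @IsTopologicalGroup H (t.coinduced f) _ := by
  let e := QuotientGroup.quotientKerEquivOfSurjective f hf
  have hcoinduced :
      t.coinduced f = (inferInstance : TopologicalSpace (G ⧸ f.ker)).induced e.symm := by
    rw [show (f : G → H) = e ∘ QuotientGroup.mk from rfl, ← coinduced_compose]
    exact congrFun (e.toEquiv.induced_symm).symm _
  rw [hcoinduced]
  exact topologicalGroup_induced e.symm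

open Topology

namespace IsTau

variable {G H : Type*} [Group G] [Group H] {tG τG : TopologicalSpace G}
  {tH τH : TopologicalSpace H}

theorem continuous_of_continuous (hG : IsTau tG τG) (hH : IsTau tH τH) (f : G →* H)
    (hf : Continuous[tG, tH] f) : Continuous[τG, τH] f := by
  have := hH.2.1
  have hle : tG ≤ τH.induced f :=
    continuous_iff_le_induced.mp (continuous_le_rng hH.1 hf)
  exact continuous_iff_le_induced.mpr (hG.2.2 _ hle (topologicalGroup_induced f))

theorem le_coinduced_of_surjective (hG : IsTau tG τG) (hH : IsTau tH τH) (f : G →* H)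
    (hf : Function.Surjective f) (h : tH ≤ tG.coinduced f) : τH ≤ τG.coinduced f := by
  have := hG.2.1
  exact hH.2.2 _ (h.trans (coinduced_mono hG.1))
    (isTopologicalGroup_coinduced_of_surjective τG f hf)

end IsTau

/-- If `f : G → H` is a homomorphism of groups with topology which is a topological
quotient map, then `τ(f) : τ(G) → τ(H)` is a topological quotient map. -/
theorem tau_quotientMap {G H : Type*} [Group G] [Group H]
    (tG : TopologicalSpace G) (tH : TopologicalSpace H)
    (τG : TopologicalSpace G) (τH : TopologicalSpace H)
    (hG : IsTau tG τG) (hH : IsTau tH τH)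
    (f : G →* H) (hsurj : Function.Surjective f)
    (hq : tH = tG.coinduced f) :
    Function.Surjective f ∧ @Continuous G H τG τH f ∧ τH = τG.coinduced f := by
  have hcont : Continuous[tG, tH] f := continuous_iff_coinduced_le.mpr hq.ge
  have hτcont : Continuous[τG, τH] f := hG.continuous_of_continuous hH f hcont
  exact ⟨hsurj, hτcont, le_antisymm (hG.le_coinduced_of_surjective hH f hsurj hq.le)
    (continuous_iff_coinduced_le.mp hτcont)⟩
end

section
/- For any based topological space (X, x₀), the fundamental group π₁(X, x₀) equipped with the quotient topology from the loop space Ω(X, x₀) (with the compact-open topology) is a quasitopological group: inversion and all left and right translations are continuous. -/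
/-- The natural map from the loop space (with the compact-open topology) to the
fundamental group, sending a loop to its path-homotopy class. -/
noncomputable def piMk {X : Type*} [TopologicalSpace X] (x : X) (γ : Path x x) :
    FundamentalGroup X x :=
  @FundamentalGroup.fromPath X _ x (Quotient.mk (Path.Homotopic.setoid x x) γ)

/-- The quotient topology on the fundamental group, coinduced from the loop space
(with the compact-open topology): the topology of `π₁^{qtop}(X, x)`. -/
noncomputable def qTop (X : Type*) [TopologicalSpace X] (x : X) :
    TopologicalSpace (FundamentalGroup X x) :=
  TopologicalSpace.coinduced (piMk x) inferInstance

/-- `τ` is the finest group topology on `π₁(X, x)` making the natural map from the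
loop space continuous: the topology of `π₁^τ(X, x)`. -/
noncomputable def IsTauPi {X : Type*} [TopologicalSpace X] (x : X)
    (τ : TopologicalSpace (FundamentalGroup X x)) : Prop :=
  @IsTopologicalGroup (FundamentalGroup X x) τ _ ∧
    @Continuous (Path x x) (FundamentalGroup X x) _ τ (piMk x) ∧
    ∀ s : TopologicalSpace (FundamentalGroup X x),
      @IsTopologicalGroup (FundamentalGroup X x) s _ →
      @Continuous (Path x x) (FundamentalGroup X x) _ s (piMk x) → τ ≤ s

section

variable {X : Type*} [TopologicalSpace X] (x : X)

/-- Multiplication in `FundamentalGroup` is composition in the fundamental groupoid, so it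
reverses the order of concatenation. -/
lemma piMk_trans (a b : Path x x) : piMk x (a.trans b) = piMk x b * piMk x a := rfl

lemma piMk_symm (a : Path x x) : piMk x a.symm = (piMk x a)⁻¹ := rfl

lemma piMk_surjective : Function.Surjective (piMk x) :=
  fun g => Quotient.exists_rep (g : Path.Homotopic.Quotient x x)

lemma continuous_qTop_of_comp_piMk {f : FundamentalGroup X x → FundamentalGroup X x}
    {F : Path x x → Path x x} (hF : Continuous F) (hfF : f ∘ piMk x = piMk x ∘ F) :
    @Continuous _ _ (qTop X x) (qTop X x) f := by
  let := qTop X x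
  rw [qTop, continuous_coinduced_dom, hfF]
  exact continuous_coinduced_rng.comp hF

end

/-- `π₁^{qtop}(X, x₀)` is a quasitopological group: inversion and all left and right
translations are continuous. -/
theorem qtop_quasiTopologicalGroup {X : Type*} [TopologicalSpace X] (x : X) :
    @Continuous _ _ (qTop X x) (qTop X x) (fun g : FundamentalGroup X x => g⁻¹) ∧
      (∀ g : FundamentalGroup X x,
        @Continuous _ _ (qTop X x) (qTop X x) (fun h : FundamentalGroup X x => g * h)) ∧
      (∀ g : FundamentalGroup X x,
        @Continuous _ _ (qTop X x) (qTop X x) (fun h : FundamentalGroup X x => h * g)) := by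
  refine ⟨continuous_qTop_of_comp_piMk x Path.continuous_symm
    (funext fun a => (piMk_symm x a).symm), fun g => ?_, fun g => ?_⟩
  all_goals obtain ⟨a, rfl⟩ := piMk_surjective x g
  · exact continuous_qTop_of_comp_piMk x
      (Path.continuous_trans.comp (continuous_id.prodMk continuous_const))
      (funext fun b => (piMk_trans x b a).symm)
  · exact continuous_qTop_of_comp_piMk x
      (Path.continuous_trans.comp (continuous_const.prodMk continuous_id))
      (funext fun b => (piMk_trans x a b).symm)
end

section
/- If γ : I → X is a path, then the map π₁^τ(X, γ(1)) → π₁^τ(X, γ(0)) sending [α] to [γ ∗ α ∗ γ⁻¹] is an isomorphism of topological groups. -/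
/-!
Conjugation by `γ` is a group isomorphism whose two directions are lifted, on loop spaces, by the
continuous maps `α ↦ γ ∗ α ∗ γ⁻¹` and `β ↦ γ⁻¹ ∗ β ∗ γ`. Since `τ` is the finest group topology
making `Ω(X, x) → π₁(X, x)` continuous, a homomorphism out of `π₁^τ(X, x)` into a topological
group is continuous as soon as its composite with `Ω(X, x) → π₁(X, x)` is.
-/

open FundamentalGroup

section

variable {X : Type*} [TopologicalSpace X]

theorem Path.continuous_trans_trans {w x y z : X} (p : Path w x) (q : Path y z) :
    Continuous fun α : Path x y => (p.trans α).trans q := by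
  fun_prop

section Quotient

open Path.Homotopic.Quotient

theorem piMk_eq_fromPath_mk {x : X} (α : Path x x) : piMk x α = fromPath (mk α) := rfl

theorem fundamentalGroupMulEquivOfPath_piMk {x y : X} (p : Path x y) (α : Path x x) :
    fundamentalGroupMulEquivOfPath p (piMk x α) = piMk y ((p.symm.trans α).trans p) := by
  rw [piMk_eq_fromPath_mk, piMk_eq_fromPath_mk, mk_trans, mk_trans, trans_assoc]
  -- the groupoid inverse of `⟦p⟧` reduces to `⟦p.symm⟧`
  rfl

theorem fundamentalGroupMulEquivOfPath_symm_piMk {x y : X} (p : Path x y) (β : Path y y) :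
    (fundamentalGroupMulEquivOfPath p).symm (piMk y β) = piMk x ((p.trans β).trans p.symm) := by
  rw [MulEquiv.symm_apply_eq, fundamentalGroupMulEquivOfPath_piMk, piMk_eq_fromPath_mk,
    piMk_eq_fromPath_mk]
  simp only [mk_trans, mk_symm, trans_assoc, symm_trans, trans_refl]
  rw [← trans_assoc, symm_trans, refl_trans]

end Quotient

theorem IsTauPi.continuous_of_continuous_comp {x : X} {τ : TopologicalSpace (FundamentalGroup X x)}
    (hτ : IsTauPi x τ) {G : Type*} [Group G] [TopologicalSpace G] [IsTopologicalGroup G]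
    (f : FundamentalGroup X x →* G) (hf : Continuous (f ∘ piMk x)) :
    @Continuous _ _ τ _ f := by
  rw [continuous_iff_le_induced]
  exact hτ.2.2 _ (topologicalGroup_induced f) (continuous_induced_rng.2 hf)

theorem IsTauPi.continuous_of_lift {x y : X} {τx : TopologicalSpace (FundamentalGroup X x)}
    {τy : TopologicalSpace (FundamentalGroup X y)} (hx : IsTauPi x τx) (hy : IsTauPi y τy)
    (f : FundamentalGroup X x →* FundamentalGroup X y) {c : Path x x → Path y y}
    (hc : Continuous c) (hfc : ∀ α, f (piMk x α) = piMk y (c α)) :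
    @Continuous _ _ τx τy f := by
  let := τy
  have := hy.1
  have hlift : f ∘ piMk x = piMk y ∘ c := funext hfc
  exact IsTauPi.continuous_of_continuous_comp hx f (hlift ▸ hy.2.1.comp hc)

end

/-- Change of basepoint: for a path `γ` from `a` to `b`, the map
`π₁^τ(X, b) → π₁^τ(X, a)`, `[α] ↦ [γ ∗ α ∗ γ⁻¹]`, is an isomorphism of topological
groups. -/
theorem piTau_basepoint_change {X : Type*} [TopologicalSpace X] {a b : X}
    (γ : Path a b)
    (τa : TopologicalSpace (FundamentalGroup X a))
    (τb : TopologicalSpace (FundamentalGroup X b))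
    (hτa : IsTauPi a τa) (hτb : IsTauPi b τb) :
    ∃ e : FundamentalGroup X b ≃* FundamentalGroup X a,
      (∀ α : Path b b, e (piMk b α) = piMk a ((γ.trans α).trans γ.symm)) ∧
      @Continuous _ _ τb τa e ∧ @Continuous _ _ τa τb e.symm := by
  set e := (fundamentalGroupMulEquivOfPath γ).symm
  have he : ∀ α, e (piMk b α) = piMk a ((γ.trans α).trans γ.symm) :=
    fundamentalGroupMulEquivOfPath_symm_piMk γ
  have he_symm : ∀ β, e.symm (piMk a β) = piMk b ((γ.symm.trans β).trans γ) :=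
    fundamentalGroupMulEquivOfPath_piMk γ
  exact ⟨e, he,
    IsTauPi.continuous_of_lift hτb hτa e.toMonoidHom
      (Path.continuous_trans_trans γ γ.symm) he,
    IsTauPi.continuous_of_lift hτa hτb e.symm.toMonoidHom
      (Path.continuous_trans_trans γ.symm γ) he_symm⟩
end

section
/- If X is path connected and π₁^τ(X, x₀) is Hausdorff for every choice of basepoint, then X is homotopically path-Hausdorff: for any two paths α, β with the same endpoints that are not homotopic rel endpoints, there is a partition 0 = t₀ < ⋯ < t_k = 1 and open sets U₁, …, U_k with α([t_{i−1}, t_i]) ⊆ U_i such that every path γ with γ(t_i) = α(t_i) and γ([t_{i−1}, t_i]) ⊆ U_i is not homotopic to β rel endpoints. -/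
/-!
The map `γ ↦ [γ ∗ β⁻¹]` from paths `a ⟶ b` to `π₁^τ(X, a)` is continuous, and points of
`π₁^τ(X, a)` are closed, so the paths not homotopic to `β` form an open neighbourhood of `α`.
Every neighbourhood of a path in the compact-open topology contains one of the form
`{γ | γ [tᵢ₋₁, tᵢ] ⊆ Uᵢ}` for a fine enough uniform partition `t`: a basic neighbourhood
`⋂ⱼ {γ | γ Kⱼ ⊆ Uⱼ}` is refined by choosing, via a Lebesgue number, a partition each of whose
intervals lies in a neighbourhood of some point `s` that misses every `Kⱼ` not containing `s`;
the open set assigned to that interval is the intersection of the `Uⱼ` with `s ∈ Kⱼ`.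
-/

open Set Topology unitInterval

theorem Path.Homotopic.Quotient.trans_symm_eq_refl_iff {X : Type*} [TopologicalSpace X]
    {a b : X} (p q : Path.Homotopic.Quotient a b) :
    p.trans q.symm = .refl a ↔ p = q := by
  constructor
  · intro h
    simpa using congrArg (·.trans q) h
  · rintro rfl
    exact Path.Homotopic.Quotient.trans_symm p

theorem piMk_trans_symm_eq_one_iff {X : Type*} [TopologicalSpace X] {a b : X}
    (γ β : Path a b) : piMk a (γ.trans β.symm) = 1 ↔ γ.Homotopic β :=
  (Path.Homotopic.Quotient.trans_symm_eq_refl_iff (.mk γ) (.mk β)).trans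
    Path.Homotopic.Quotient.eq

namespace unitInterval

noncomputable def uniformPartition (n : ℕ) (j : Fin (n + 1)) : I :=
  ⟨j / n, div_mem j.val.cast_nonneg n.cast_nonneg (Nat.cast_le.2 j.is_le)⟩

variable {n : ℕ}

theorem coe_uniformPartition (j : Fin (n + 1)) : (uniformPartition n j : ℝ) = j / n := rfl

theorem uniformPartition_zero : uniformPartition n 0 = 0 := by
  ext; simp [coe_uniformPartition]

theorem uniformPartition_last (hn : n ≠ 0) : uniformPartition n (Fin.last n) = 1 := by
  ext; simp [coe_uniformPartition, hn]

theorem uniformPartition_strictMono (hn : n ≠ 0) : StrictMono (uniformPartition n) := by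
  intro i j hij
  rw [← Subtype.coe_lt_coe, coe_uniformPartition, coe_uniformPartition]
  gcongr
  exact Nat.cast_lt.2 hij

theorem exists_mem_Icc_uniformPartition (hn : n ≠ 0) (r : I) :
    ∃ i : Fin n, r ∈ Icc (uniformPartition n i.castSucc) (uniformPartition n i.succ) := by
  have hn' : (0 : ℝ) < n := Nat.cast_pos.2 (Nat.pos_of_ne_zero hn)
  have hfloor : (⌊(r : ℝ) * n⌋₊ : ℝ) ≤ r * n := Nat.floor_le (mul_nonneg r.2.1 hn'.le)
  simp only [mem_Icc, ← Subtype.coe_le_coe, coe_uniformPartition, Fin.val_castSucc,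
    Fin.val_succ, div_le_iff₀ hn', le_div_iff₀ hn']
  rcases lt_or_ge ⌊(r : ℝ) * n⌋₊ n with h | h
  · refine ⟨⟨_, h⟩, hfloor, ?_⟩
    exact_mod_cast (Nat.lt_floor_add_one _).le
  · refine ⟨⟨n - 1, by omega⟩, le_trans ?_ hfloor, ?_⟩
    · exact_mod_cast h.trans' (Nat.sub_le n 1)
    · rw [Nat.sub_add_cancel (Nat.pos_of_ne_zero hn)]
      exact mul_le_of_le_one_left hn'.le r.2.2

theorem Icc_uniformPartition_subset_closedBall (i : Fin n) :
    Icc (uniformPartition n i.castSucc) (uniformPartition n i.succ) ⊆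
      Metric.closedBall (uniformPartition n i.castSucc) (1 / n) := by
  rintro r ⟨h₀, h₁⟩
  rw [← Subtype.coe_le_coe] at h₀ h₁
  rw [Metric.mem_closedBall, Subtype.dist_eq, Real.dist_eq, abs_of_nonneg (sub_nonneg.2 h₀)]
  simp only [coe_uniformPartition, Fin.val_castSucc, Fin.val_succ, Nat.cast_add, Nat.cast_one,
    add_div] at h₁ ⊢
  linarith

theorem exists_uniformPartition_Icc_subset_open_cover {ι : Type*} {c : ι → Set I}
    (hc₁ : ∀ i, IsOpen (c i)) (hc₂ : univ ⊆ ⋃ i, c i) :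
    ∃ n ≠ 0, ∀ i : Fin n, ∃ j,
      Icc (uniformPartition n i.castSucc) (uniformPartition n i.succ) ⊆ c j := by
  obtain ⟨δ, hδ, hball⟩ := lebesgue_number_lemma_of_metric isCompact_univ hc₁ hc₂
  obtain ⟨n, hn⟩ := exists_nat_one_div_lt hδ
  refine ⟨n + 1, n.succ_ne_zero, fun i => ?_⟩
  obtain ⟨j, hj⟩ := hball (uniformPartition (n + 1) i.castSucc) trivial
  have hnδ : 1 / ((n + 1 : ℕ) : ℝ) < δ := by exact_mod_cast hn
  exact ⟨j, (Icc_uniformPartition_subset_closedBall i).trans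
    ((Metric.closedBall_subset_ball hnδ).trans hj)⟩

end unitInterval

theorem ContinuousMap.exists_uniformPartition_image_subset_of_mem_nhds {X : Type*}
    [TopologicalSpace X] {f : C(I, X)} {W : Set C(I, X)} (hW : W ∈ 𝓝 f) :
    ∃ n ≠ 0, ∃ U : Fin n → Set X, (∀ i, IsOpen (U i)) ∧
      (∀ i, f '' Icc (uniformPartition n i.castSucc) (uniformPartition n i.succ) ⊆ U i) ∧
      ∀ g : C(I, X),
        (∀ i, g '' Icc (uniformPartition n i.castSucc) (uniformPartition n i.succ) ⊆ U i) →
        g ∈ W := by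
  obtain ⟨S, hS, hSf, hSW⟩ := ContinuousMap.mem_nhds_iff.1 hW
  set O : I → Set X := fun s => ⋂ KU ∈ {KU ∈ S | s ∈ KU.1}, KU.2
  set V : I → Set I := fun s => f ⁻¹' O s ∩ (⋃ KU ∈ {KU ∈ S | s ∉ KU.1}, KU.1)ᶜ
  have hO : ∀ s, IsOpen (O s) := fun s =>
    (hS.subset (sep_subset _ _)).isOpen_biInter fun KU hKU => (hSf _ _ hKU.1).2.1
  have hV : ∀ s, IsOpen (V s) := fun s =>
    ((hO s).preimage f.continuous).inter <| isOpen_compl_iff.2 <|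
      (hS.subset (sep_subset _ _)).isClosed_biUnion fun KU hKU => (hSf _ _ hKU.1).1.isClosed
  have hsV : ∀ s, s ∈ V s := fun s =>
    ⟨mem_iInter₂.2 fun KU hKU => (hSf _ _ hKU.1).2.2 hKU.2,
      fun hs => by obtain ⟨KU, hKU, hsK⟩ := mem_iUnion₂.1 hs; exact hKU.2 hsK⟩
  obtain ⟨n, hn, hc⟩ := exists_uniformPartition_Icc_subset_open_cover hV
    fun s _ => mem_iUnion.2 ⟨s, hsV s⟩
  choose c hc using hc
  refine ⟨n, hn, fun i => O (c i), fun i => hO _, fun i => ?_, fun g hg => hSW ?_⟩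
  · rintro _ ⟨r, hr, rfl⟩
    exact (hc i hr).1
  · intro K U hKU r hrK
    obtain ⟨i, hi⟩ := exists_mem_Icc_uniformPartition hn r
    have hciK : c i ∈ K := by_contra fun h => (hc i hi).2 (mem_biUnion ⟨hKU, h⟩ hrK)
    exact mem_iInter₂.1 (hg i ⟨r, hi, rfl⟩) (K, U) ⟨hKU, hciK⟩

theorem Path.exists_uniformPartition_image_subset_of_mem_nhds {X : Type*}
    [TopologicalSpace X] {a b : X} {α : Path a b} {W : Set (Path a b)} (hW : W ∈ 𝓝 α) :
    ∃ n ≠ 0, ∃ U : Fin n → Set X, (∀ i, IsOpen (U i)) ∧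
      (∀ i, α '' Icc (uniformPartition n i.castSucc) (uniformPartition n i.succ) ⊆ U i) ∧
      ∀ γ : Path a b,
        (∀ i, γ '' Icc (uniformPartition n i.castSucc) (uniformPartition n i.succ) ⊆ U i) →
        γ ∈ W := by
  rw [nhds_induced, Filter.mem_comap] at hW
  obtain ⟨W', hW', hW'W⟩ := hW
  obtain ⟨n, hn, U, hU, hαU, hW'U⟩ :=
    ContinuousMap.exists_uniformPartition_image_subset_of_mem_nhds hW'
  exact ⟨n, hn, U, hU, hαU, fun γ hγ => hW'W (hW'U γ hγ)⟩

theorem piTau_hausdorff_implies_homotopically_path_hausdorff_general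
    {X : Type*} [TopologicalSpace X]
    (τ : ∀ x : X, TopologicalSpace (FundamentalGroup X x))
    (hτ : ∀ x : X, IsTauPi x (τ x))
    (hHaus : ∀ x : X, @T2Space _ (τ x)) :
    ∀ (a b : X) (α β : Path a b), ¬α.Homotopic β →
      ∃ (n : ℕ) (t : Fin (n + 1) → unitInterval) (U : Fin n → Set X),
        StrictMono t ∧ t 0 = 0 ∧ t (Fin.last n) = 1 ∧
        (∀ i : Fin n, IsOpen (U i)) ∧
        (∀ i : Fin n, (⇑α) '' Set.Icc (t i.castSucc) (t i.succ) ⊆ U i) ∧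
        ∀ γ : Path a b, (∀ j : Fin (n + 1), γ (t j) = α (t j)) →
          (∀ i : Fin n, (⇑γ) '' Set.Icc (t i.castSucc) (t i.succ) ⊆ U i) →
          ¬γ.Homotopic β := by
  intro a b α β hαβ
  let _ : TopologicalSpace (FundamentalGroup X a) := τ a
  have : T2Space (FundamentalGroup X a) := hHaus a
  have hcont : Continuous fun γ : Path a b => piMk a (γ.trans β.symm) :=
    (hτ a).2.1.comp (Path.continuous_trans.comp (continuous_id.prodMk continuous_const))
  have hW : {γ : Path a b | piMk a (γ.trans β.symm) ≠ 1} ∈ 𝓝 α :=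
    hcont.continuousAt.preimage_mem_nhds <|
      isOpen_ne.mem_nhds <| mt (piMk_trans_symm_eq_one_iff α β).1 hαβ
  obtain ⟨n, hn, U, hU, hαU, hWU⟩ := Path.exists_uniformPartition_image_subset_of_mem_nhds hW
  exact ⟨n, uniformPartition n, U, uniformPartition_strictMono hn, uniformPartition_zero,
    uniformPartition_last hn, hU, hαU,
    fun γ _ hγU hγβ => hWU γ hγU ((piMk_trans_symm_eq_one_iff γ β).2 hγβ)⟩

/-- If `X` is path connected and `π₁^τ(X, x)` is Hausdorff for every basepoint `x`,
then `X` is homotopically path-Hausdorff. -/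
theorem piTau_hausdorff_implies_homotopically_path_hausdorff
    {X : Type*} [TopologicalSpace X] [PathConnectedSpace X]
    (τ : ∀ x : X, TopologicalSpace (FundamentalGroup X x))
    (hτ : ∀ x : X, IsTauPi x (τ x))
    (hHaus : ∀ x : X, @T2Space _ (τ x)) :
    ∀ (a b : X) (α β : Path a b), ¬α.Homotopic β →
      ∃ (n : ℕ) (t : Fin (n + 1) → unitInterval) (U : Fin n → Set X),
        StrictMono t ∧ t 0 = 0 ∧ t (Fin.last n) = 1 ∧
        (∀ i : Fin n, IsOpen (U i)) ∧
        (∀ i : Fin n, (⇑α) '' Set.Icc (t i.castSucc) (t i.succ) ⊆ U i) ∧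
        ∀ γ : Path a b, (∀ j : Fin (n + 1), γ (t j) = α (t j)) →
          (∀ i : Fin n, (⇑γ) '' Set.Icc (t i.castSucc) (t i.succ) ⊆ U i) →
          ¬γ.Homotopic β :=
  piTau_hausdorff_implies_homotopically_path_hausdorff_general τ hτ hHaus
end

section
/- If a path p : I → X is such that X is locally path connected at p(0) and at p(1), then p is well-ended: for every open neighborhood 𝒰 of p in the path space P(X) (compact-open topology) there exist open neighborhoods V₀ of p(0) and V₁ of p(1) in X such that for all a ∈ V₀ and b ∈ V₁ there is a path q ∈ 𝒰 with q(0) = a and q(1) = b. Consequently, every path connected, locally path connected space is wep-connected. -/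
/-- `X` is locally path connected at `x`: every neighborhood of `x` contains a path
connected neighborhood of `x`. -/
def LocallyPathConnectedAt (X : Type*) [TopologicalSpace X] (x : X) : Prop :=
  ∀ U ∈ nhds x, ∃ V ∈ nhds x, V ⊆ U ∧ IsPathConnected V

/-- A path `p ∈ P(X) = C(I, X)` (compact-open topology) is well-ended. -/
def WellEnded {X : Type*} [TopologicalSpace X] (p : C(unitInterval, X)) : Prop :=
  ∀ 𝒰 : Set C(unitInterval, X), IsOpen 𝒰 → p ∈ 𝒰 →
    ∃ V₀ V₁ : Set X, IsOpen V₀ ∧ IsOpen V₁ ∧ p 0 ∈ V₀ ∧ p 1 ∈ V₁ ∧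
      ∀ a ∈ V₀, ∀ b ∈ V₁, ∃ q ∈ 𝒰, q 0 = a ∧ q 1 = b

/-! A basic neighbourhood of `p` in the compact-open topology constrains `p` on finitely many
compact sets `K`. Near `0`, a compact set either avoids a small segment `[0, s]` or contains `0`,
and then its open set contains a whole neighbourhood `W₀` of `p 0`; likewise near `1`. So any path
that agrees with `p` on `[s, 1 - s]` and stays in `W₀` on `[0, s]` and in `W₁` on `[1 - s, 1]`
lies in the neighbourhood. Such a path from `a` to `b` is obtained by grafting a path from `a` to
`p 0` inside a path connected `V₀ ⊆ W₀` onto the start of `p`, and similarly at the end. -/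

open Set Filter Topology unitInterval

namespace Path

variable {X : Type*} [TopologicalSpace X] {a x y b : X} {s : I}

/-- Runs through `α` on `[0, s / 2]`, catches up with `γ` at double speed on `[s / 2, s]`, and
follows `γ` from `s` on. -/
noncomputable def prepend (α : Path a x) (γ : Path x y) (hs : 0 < s) : Path a y where
  toFun t := if (t : ℝ) ≤ s / 2 then α.extend (2 * t / s) else γ.extend (min (2 * t - s) t)
  continuous_toFun := by
    refine Continuous.if_le (α.continuous_extend.comp (by fun_prop))
      (γ.continuous_extend.comp (by fun_prop)) (by fun_prop) (by fun_prop) fun t ht => ?_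
    have hs' : (s : ℝ) ≠ 0 := (coe_pos.2 hs).ne'
    rw [ht, mul_div_cancel₀ _ two_ne_zero, div_self hs', extend_one, sub_self,
      min_eq_left (div_nonneg s.2.1 zero_le_two), extend_zero]
  source' := by simp [div_nonneg s.2.1 zero_le_two]
  target' := by
    have hs' : (0 : ℝ) < s := coe_pos.2 hs
    have : ¬ (1 : ℝ) ≤ s / 2 := by linarith [s.2.2]
    simp only [Icc.coe_one, this, if_false]
    rw [min_eq_right (by linarith [s.2.2]), extend_one]

variable (α : Path a x) (γ : Path x y) (β : Path y b) (hs : 0 < s)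

theorem prepend_apply_of_le {t : I} (h : s ≤ t) : α.prepend γ hs t = γ t := by
  have hs' : (0 : ℝ) < s := coe_pos.2 hs
  have h' : (s : ℝ) ≤ t := h
  have : ¬ (t : ℝ) ≤ s / 2 := by linarith
  simp only [prepend, coe_mk', ContinuousMap.coe_mk, this, if_false]
  rw [min_eq_right (by linarith), extend_extends']

theorem prepend_apply_mem (t : I) : α.prepend γ hs t ∈ range α ∪ γ '' Iic t := by
  simp only [prepend, coe_mk', ContinuousMap.coe_mk]
  split_ifs with ht
  · exact .inl (α.extend_range ▸ mem_range_self _)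
  · refine .inr ⟨projIcc 0 1 zero_le_one (min (2 * (t : ℝ) - s) t), ?_, rfl⟩
    calc projIcc 0 1 zero_le_one (min (2 * (t : ℝ) - s) t) ≤ projIcc 0 1 zero_le_one (t : ℝ) :=
          monotone_projIcc _ (min_le_right _ _)
      _ = t := projIcc_val _ t

/-- Appending `β` is prepending `β.symm` to the reversed path. -/
noncomputable def graftEnds : Path a b :=
  (β.symm.prepend (α.prepend γ hs).symm hs).symm

theorem graftEnds_eqOn : EqOn (α.graftEnds γ β hs) γ (Iic s ∪ Ici (σ s))ᶜ := by
  intro t ht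
  simp only [compl_union, mem_inter_iff, mem_compl_iff, mem_Iic, mem_Ici, not_le] at ht
  rw [graftEnds, symm_apply, Function.comp_apply, prepend_apply_of_le _ _ _
    (le_symm_comm.1 ht.2.le), symm_apply, Function.comp_apply, unitInterval.symm_symm,
    prepend_apply_of_le _ _ _ ht.1.le]

theorem mapsTo_graftEnds_Iic (h : s ≤ σ s) :
    MapsTo (α.graftEnds γ β hs) (Iic s) (range α ∪ γ '' Iic s) := by
  intro t (ht : t ≤ s)
  rw [graftEnds, symm_apply, Function.comp_apply, prepend_apply_of_le _ _ _
    (le_symm_comm.1 (ht.trans h)), symm_apply, Function.comp_apply, unitInterval.symm_symm]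
  exact union_subset_union_right _ (image_mono (Iic_subset_Iic.2 ht)) (prepend_apply_mem _ _ _ t)

theorem mapsTo_graftEnds_Ici (h : s ≤ σ s) :
    MapsTo (α.graftEnds γ β hs) (Ici (σ s)) (range β ∪ γ '' Ici (σ s)) := by
  intro t (ht : σ s ≤ t)
  rw [graftEnds, symm_apply, Function.comp_apply]
  rcases prepend_apply_mem β.symm (α.prepend γ hs).symm hs (σ t) with hβ | ⟨u, hu, hut⟩
  · exact .inl (β.symm_range ▸ hβ)
  · have htu : t ≤ σ u := le_symm_comm.1 hu
    rw [← hut, symm_apply, Function.comp_apply,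
      prepend_apply_of_le _ _ _ (h.trans (ht.trans htu))]
    exact .inr (mem_image_of_mem _ (ht.trans htu))

end Path

namespace ContinuousMap

variable {Y X : Type*} [TopologicalSpace Y] [T2Space Y] [TopologicalSpace X]

theorem exists_nhds_disjoint_or_subset {p : C(Y, X)} {S : Set (Set Y × Set X)} (hSf : S.Finite)
    (hS : ∀ K U, (K, U) ∈ S → IsCompact K ∧ IsOpen U ∧ MapsTo p K U) (y : Y) :
    ∃ N ∈ 𝓝 y, ∃ W ∈ 𝓝 (p y), ∀ K U, (K, U) ∈ S → Disjoint N K ∨ W ⊆ U := by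
  refine ⟨{t | ∀ KU ∈ S, t ∈ KU.1 → y ∈ KU.1}, ?_, {x | ∀ KU ∈ S, y ∈ KU.1 → x ∈ KU.2}, ?_, ?_⟩
  · refine (eventually_all_finite hSf).2 fun ⟨K, U⟩ hKU => ?_
    by_cases hy : y ∈ K
    · exact .of_forall fun _ _ => hy
    · filter_upwards [(hS K U hKU).1.isClosed.isOpen_compl.mem_nhds hy] with t ht htK
      exact absurd htK ht
  · refine (eventually_all_finite hSf).2 fun ⟨K, U⟩ hKU => ?_
    obtain ⟨-, hU, hpKU⟩ := hS K U hKU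
    by_cases hy : y ∈ K
    · filter_upwards [hU.mem_nhds (hpKU hy)] with x hx _ using hx
    · exact .of_forall fun _ h => absurd h hy
  · intro K U hKU
    by_cases hy : y ∈ K
    · exact .inr fun x hx => hx _ hKU hy
    · exact .inl (disjoint_left.2 fun t ht htK => hy (ht _ hKU htK))

theorem exists_nhds_forall_mem_of_eqOn_compl {p : C(Y, X)} {𝒰 : Set C(Y, X)} (h𝒰 : 𝒰 ∈ 𝓝 p)
    (y₀ y₁ : Y) :
    ∃ N₀ ∈ 𝓝 y₀, ∃ W₀ ∈ 𝓝 (p y₀), ∃ N₁ ∈ 𝓝 y₁, ∃ W₁ ∈ 𝓝 (p y₁),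
      ∀ (A₀ A₁ : Set Y) (q : C(Y, X)), A₀ ⊆ N₀ → A₁ ⊆ N₁ → EqOn q p (A₀ ∪ A₁)ᶜ →
        MapsTo q A₀ W₀ → MapsTo q A₁ W₁ → q ∈ 𝒰 := by
  obtain ⟨S, hSf, hS, hS𝒰⟩ := ContinuousMap.mem_nhds_iff.1 h𝒰
  obtain ⟨N₀, hN₀, W₀, hW₀, h₀⟩ := exists_nhds_disjoint_or_subset hSf hS y₀
  obtain ⟨N₁, hN₁, W₁, hW₁, h₁⟩ := exists_nhds_disjoint_or_subset hSf hS y₁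
  refine ⟨N₀, hN₀, W₀, hW₀, N₁, hN₁, W₁, hW₁, fun A₀ A₁ q hA₀ hA₁ hqp hq₀ hq₁ => hS𝒰 ?_⟩
  intro K U hKU t ht
  by_cases ht₀ : t ∈ A₀
  · refine (h₀ K U hKU).resolve_left (not_disjoint_iff.2 ⟨t, hA₀ ht₀, ht⟩) (hq₀ ht₀)
  by_cases ht₁ : t ∈ A₁
  · refine (h₁ K U hKU).resolve_left (not_disjoint_iff.2 ⟨t, hA₁ ht₁, ht⟩) (hq₁ ht₁)
  rw [hqp (by simp [ht₀, ht₁])]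
  exact (hS K U hKU).2.2 ht

end ContinuousMap

namespace unitInterval

theorem exists_pos_Iic_subset {N : Set I} (hN : N ∈ 𝓝 0) : ∃ s : I, 0 < s ∧ Iic s ⊆ N := by
  obtain ⟨u, hu, huN⟩ := exists_Ico_subset_of_mem_nhds hN ⟨1, zero_lt_one⟩
  obtain ⟨s, hs, hsu⟩ := exists_between hu
  exact ⟨s, hs, fun t ht => huN ⟨nonneg t, lt_of_le_of_lt ht hsu⟩⟩

theorem exists_pos_Iic_subset_and_Ici_symm_subset {N₀ N₁ : Set I} (h₀ : N₀ ∈ 𝓝 0)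
    (h₁ : N₁ ∈ 𝓝 1) : ∃ s : I, 0 < s ∧ s ≤ σ s ∧ Iic s ⊆ N₀ ∧ Ici (σ s) ⊆ N₁ := by
  have h₁' : σ ⁻¹' N₁ ∈ 𝓝 0 := continuous_symm.continuousAt.preimage_mem_nhds (by rwa [symm_zero])
  have hlt : {t : I | t < σ t} ∈ 𝓝 0 :=
    (isOpen_lt continuous_id continuous_symm).mem_nhds (by simp [symm_zero])
  obtain ⟨s, hs, hsN⟩ := exists_pos_Iic_subset (inter_mem (inter_mem h₀ h₁') hlt)
  refine ⟨s, hs, (hsN (mem_Iic.2 le_rfl)).2.le, fun t ht => (hsN ht).1.1, fun t ht => ?_⟩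
  simpa using (hsN (symm_le_symm.2 ht |>.trans_eq (symm_symm s) : σ t ≤ s)).1.2

end unitInterval

theorem WellEnded.of_locallyPathConnectedAt {X : Type*} [TopologicalSpace X] {p : C(I, X)}
    (h₀ : LocallyPathConnectedAt X (p 0)) (h₁ : LocallyPathConnectedAt X (p 1)) :
    WellEnded p := by
  intro 𝒰 h𝒰 hp𝒰
  obtain ⟨N₀, hN₀, W₀, hW₀, N₁, hN₁, W₁, hW₁, hmem⟩ :=
    ContinuousMap.exists_nhds_forall_mem_of_eqOn_compl (h𝒰.mem_nhds hp𝒰) 0 1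
  obtain ⟨V₀, hV₀, hV₀W₀, hV₀pc⟩ := h₀ W₀ hW₀
  obtain ⟨V₁, hV₁, hV₁W₁, hV₁pc⟩ := h₁ W₁ hW₁
  obtain ⟨s, hs, hsσ, hs₀, hs₁⟩ := exists_pos_Iic_subset_and_Ici_symm_subset
    (inter_mem hN₀ (p.continuous.continuousAt.preimage_mem_nhds hW₀))
    (inter_mem hN₁ (p.continuous.continuousAt.preimage_mem_nhds hW₁))
  refine ⟨interior V₀, interior V₁, isOpen_interior, isOpen_interior,
    mem_interior_iff_mem_nhds.2 hV₀, mem_interior_iff_mem_nhds.2 hV₁, fun a ha b hb => ?_⟩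
  have hα := hV₀pc.joinedIn a (interior_subset ha) (p 0) (mem_of_mem_nhds hV₀)
  have hβ := hV₁pc.joinedIn (p 1) (mem_of_mem_nhds hV₁) b (interior_subset hb)
  let q := hα.somePath.graftEnds ⟨p, rfl, rfl⟩ hβ.somePath hs
  refine ⟨q, hmem _ _ q (fun t ht => (hs₀ ht).1) (fun t ht => (hs₁ ht).1)
    (Path.graftEnds_eqOn _ _ _ hs) ?_ ?_, q.source, q.target⟩
  · refine (Path.mapsTo_graftEnds_Iic _ _ _ hs hsσ).mono_right (union_subset ?_ ?_)
    · exact range_subset_iff.2 fun t => hV₀W₀ (hα.somePath_mem t)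
    · exact image_subset_iff.2 fun t ht => (hs₀ ht).2
  · refine (Path.mapsTo_graftEnds_Ici _ _ _ hs hsσ).mono_right (union_subset ?_ ?_)
    · exact range_subset_iff.2 fun t => hV₁W₁ (hβ.somePath_mem t)
    · exact image_subset_iff.2 fun t ht => (hs₁ ht).2

/-- A path whose endpoints are points of local path connectedness is well-ended;
consequently every path connected, locally path connected space is wep-connected. -/
theorem wellEnded_of_locallyPathConnectedAt {X : Type*} [TopologicalSpace X] :
    (∀ p : C(unitInterval, X),
      LocallyPathConnectedAt X (p 0) → LocallyPathConnectedAt X (p 1) → WellEnded p) ∧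
    ((∀ x : X, LocallyPathConnectedAt X x) → PathConnectedSpace X →
      ∀ x y : X, ∃ p : C(unitInterval, X), p 0 = x ∧ p 1 = y ∧ WellEnded p) := by
  refine ⟨fun _ => WellEnded.of_locallyPathConnectedAt, fun hX _ x y => ?_⟩
  let γ := PathConnectedSpace.somePath x y
  exact ⟨γ, γ.source, γ.target, .of_locallyPathConnectedAt (hX _) (hX _)⟩
end
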